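/- In a model of ZF, if the class of stacks Π is countable and for every formula R(x,y) there is a function symbol f such that ∀x (∃y R(x,y) → ∃ϖ ∈ Π, R(x, f(x,ϖ))), then the non-extensional principle of choice holds: for every binary relation R there is a functional relation Φ such that ∀x∀y∀y′(Φ(x,y) ∧ Φ(x,y′) → y = y′) and ∀x∀y(R(x,y) → ∃y′(R(x,y′) ∧ Φ(x,y′))). Concretely, fixing an enumeration g : ℕ → Π, define Φ(x,y) as 'y = f(x, g(n)) for the least n ∈ ℕ such that R(x, f(x, g(n)))'; then Φ has the two stated properties. -/
import Mathlib

/-- Non-extensional principle of choice from a countable class of stacks.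
If `Π` is countable (there is a surjection `g : ℕ → Π`) and `f` is a
Skolem-type function for the relation `R`, i.e.
`∀ x, (∃ y, R x y) → ∃ ϖ, R x (f x ϖ)`, then there is a functional relation `Φ`
(defined by choosing the least `n` with `R x (f x (g n))`) such that
`Φ` is functional and `∀ x y, R x y → ∃ y′, R x y′ ∧ Φ x y′`. -/
theorem nonextensional_principle_of_choice {α β Pi : Type*}
    (g : ℕ → Pi) (hg : Function.Surjective g)
    (R : α → β → Prop) (f : α → Pi → β)
    (hf : ∀ x : α, (∃ y, R x y) → ∃ ϖ : Pi, R x (f x ϖ)) :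
    ∃ Φ : α → β → Prop,
      (∀ x y y', Φ x y → Φ x y' → y = y') ∧
      (∀ x y, R x y → ∃ y', R x y' ∧ Φ x y') := by
  classical
  refine ⟨fun x y => ∃ h : ∃ n, R x (f x (g n)), y = f x (g (Nat.find h)), ?_, ?_⟩
  · rintro x y y' ⟨h1, rfl⟩ ⟨h2, rfl⟩
    rfl
  · intro x y hxy
    obtain ⟨ϖ, hϖ⟩ := hf x ⟨y, hxy⟩
    obtain ⟨n, rfl⟩ := hg ϖ
    have h : ∃ n, R x (f x (g n)) := ⟨n, hϖ⟩
    exact ⟨f x (g (Nat.find h)), Nat.find_spec h, h, rfl⟩
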